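/- arXiv:1807.03703 — 3 statements merged into one kernel-verified Lean document; each statement's English description precedes it below -/
import Mathlib

section
/- For any prompt schedule on P processors of a well-formed DAG g containing a thread a at priority ρ, the response time T(a) of thread a satisfies T(a) ≤ W_{≰ρ}(comp(a))/P + span_a(comp(a)), where W_{≰ρ}(comp(a)) is the number of vertices of the competitor subgraph comp(a) whose priority is not less than ρ, and span_a(comp(a)) is the length of the longest path in comp(a) ending at the last vertex of a. -/
/-! Cost DAGs with prioritized threads, spawn edges, and join edges. -/

/-- A DAG of prioritized threads.  Each thread (drawn from the index type `T`)
has a priority and a finite sequence of vertices (connected implicitly by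
thread edges).  `spawn` contains spawn edges `(u, a)` from a vertex `u` to
(the first vertex of) a thread `a`; `join` contains join edges `(a, u)` from
(the last vertex of) a thread `a` to a vertex `u`.  `owner u` is the thread
containing the vertex `u`. -/
structure Dag (V P T : Type) where
  prio : T → P
  verts : T → List V
  owner : V → T
  spawn : Set (V × T)
  join : Set (T × V)

namespace Dag

variable {V P T : Type}

/-- Thread edge: `u` and `u'` are consecutive vertices of some thread. -/
def threadEdge (g : Dag V P T) (u u' : V) : Prop :=
  ∃ t i, (g.verts t)[i]? = some u ∧ (g.verts t)[i+1]? = some u'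

/-- Spawn edge, viewed as an edge from `u` to the first vertex of the spawned thread. -/
def spawnEdge (g : Dag V P T) (u u' : V) : Prop :=
  ∃ t, (u, t) ∈ g.spawn ∧ (g.verts t).head? = some u'

/-- Join edge, viewed as an edge from the last vertex of the joined thread to `u'`. -/
def joinEdge (g : Dag V P T) (u u' : V) : Prop :=
  ∃ t, (t, u') ∈ g.join ∧ (g.verts t).getLast? = some u

/-- Any edge of the DAG. -/
def edge (g : Dag V P T) (u u' : V) : Prop :=
  g.threadEdge u u' ∨ g.spawnEdge u u' ∨ g.joinEdge u u'

/-- `g.anc u u'` : there is a directed path from `u` to `u'` (u is an ancestor of u'). -/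
def anc (g : Dag V P T) : V → V → Prop :=
  Relation.ReflTransGen g.edge

/-- The DAG is acyclic. -/
def Acyclic (g : Dag V P T) : Prop :=
  ∀ u u', g.anc u u' → g.anc u' u → u = u'

/-- Every vertex in a thread's vertex list is owned by that thread. -/
def OwnerConsistent (g : Dag V P T) : Prop :=
  ∀ t u, u ∈ g.verts t → g.owner u = t

/-- The priority of a vertex is the priority of the thread containing it. -/
def vprio (g : Dag V P T) (u : V) : P := g.prio (g.owner u)

variable [PartialOrder P]

/-- Well-formedness: for every thread with first vertex `u₁` and last vertex `uₙ`,
every ancestor `u` of `uₙ` which is not an ancestor of `u₁` has priority at least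
the priority of the thread. -/
def WellFormed (g : Dag V P T) : Prop :=
  ∀ t u₁ uₙ u, (g.verts t).head? = some u₁ → (g.verts t).getLast? = some uₙ →
    g.anc u uₙ → ¬ g.anc u u₁ → g.prio t ≤ g.vprio u

/-- Strong well-formedness: (1) every join edge `(a, u)` goes from a thread `a`
to a vertex `u` of a thread of lower-or-equal priority; (2) every spawn edge
`(u', a)` with a matching join edge `(a, u)` admits a path from `u'` to `u`
whose first edge is a thread edge. -/
def StronglyWellFormed (g : Dag V P T) : Prop :=
  (∀ a u, (a, u) ∈ g.join → g.vprio u ≤ g.prio a) ∧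
  (∀ a u' u, (u', a) ∈ g.spawn → (a, u) ∈ g.join →
    ∃ w, g.threadEdge u' w ∧ g.anc w u)

end Dag

/-! Schedules of a DAG on `Pn` processors. -/

namespace Dag

variable {V P T : Type}

/-- The set of vertices executed before step `n` (steps are numbered `0, 1, 2, ...`;
step `m` executes the finite set `sched m`). -/
def executedBy (sched : ℕ → Finset V) (n : ℕ) : Set V :=
  {u | ∃ m < n, u ∈ sched m}

/-- A vertex is ready at (the start of) step `n` if it has not been executed and
all of its proper ancestors have been executed. -/
def readyAt (g : Dag V P T) (sched : ℕ → Finset V) (n : ℕ) (u : V) : Prop :=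
  u ∉ executedBy sched n ∧ ∀ u', g.edge u' u → u' ∈ executedBy sched n

/-- A valid schedule on `Pn` processors: at each step, at most `Pn` ready vertices
are executed. -/
structure IsSchedule (g : Dag V P T) (Pn : ℕ) (sched : ℕ → Finset V) : Prop where
  card_le : ∀ n, (sched n).card ≤ Pn
  ready : ∀ n u, u ∈ sched n → g.readyAt sched n u

/-- A greedy schedule executes `min Pn (#ready vertices)` vertices at each step. -/
def Greedy (g : Dag V P T) (Pn : ℕ) (sched : ℕ → Finset V) : Prop :=
  ∀ n, (sched n).card = min Pn {u | g.readyAt sched n u}.ncard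

variable [PartialOrder P]

/-- A prompt schedule is greedy and never leaves a ready vertex unexecuted while
executing a ready vertex of strictly lower priority. -/
def Prompt (g : Dag V P T) (Pn : ℕ) (sched : ℕ → Finset V) : Prop :=
  g.Greedy Pn sched ∧
  ∀ n u v, g.readyAt sched n u → g.readyAt sched n v →
    u ∈ sched n → v ∉ sched n → ¬ (g.vprio u < g.vprio v)

/-- The competitor subgraph of thread `a` with first vertex `s` and last vertex `t`:
the vertices of `g` that are neither proper ancestors of `s` nor proper
descendants of `t`. -/
def compSet (g : Dag V P T) (s t : V) : Set V :=
  {u | ¬ (g.anc u s ∧ u ≠ s) ∧ ¬ (g.anc t u ∧ u ≠ t)}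

/-- `l` is a path in the vertex set `S` ending at `t`. -/
def IsPathTo (g : Dag V P T) (S : Set V) (t : V) (l : List V) : Prop :=
  l ≠ [] ∧ l.Chain' g.edge ∧ l.Nodup ∧ (∀ u ∈ l, u ∈ S) ∧ l.getLast? = some t

end Dag

/-!
Follow a critical path backwards from the last vertex `t` of `a`, passing from a vertex `x` to
a parent of `x` executed last. From the execution of that parent until that of `x`, the
ancestor `x` of `t` is ready but waiting, so by greediness each of these steps keeps all `Pn`
processors busy and, by promptness, with vertices of priority not below that of `x`, which
well-formedness puts at least `ρ`. Hence every step of the response interval either executes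
`Pn` vertices counted by `W`, or executes a vertex of a path in `comp(a)` ending at `t`.
-/

namespace Dag

variable {V P T : Type} {g : Dag V P T} {Pn : ℕ} {sched : ℕ → Finset V}

lemma executedBy_mono (sched : ℕ → Finset V) {n n' : ℕ} (h : n ≤ n') :
    executedBy sched n ⊆ executedBy sched n' := by
  rintro u ⟨m, hm, hu⟩
  exact ⟨m, hm.trans_le h, hu⟩

lemma IsPathTo.singleton {S : Set V} {x : V} (hx : x ∈ S) : g.IsPathTo S x [x] :=
  ⟨List.cons_ne_nil x [], List.isChain_singleton x, List.nodup_singleton x, by simpa using hx,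
    rfl⟩

lemma IsPathTo.mono {S S' : Set V} {x : V} {l : List V} (hl : g.IsPathTo S x l) (h : S ⊆ S') :
    g.IsPathTo S' x l :=
  ⟨hl.1, hl.2.1, hl.2.2.1, fun u hu => h (hl.2.2.2.1 u hu), hl.2.2.2.2⟩

lemma IsPathTo.concat {S : Set V} {x y : V} {l : List V} (hl : g.IsPathTo S y l)
    (hyx : g.edge y x) (hx : x ∈ S) (hxl : x ∉ l) : g.IsPathTo S x (l ++ [x]) := by
  obtain ⟨-, hchain, hnodup, hmem, hlast⟩ := hl
  refine ⟨by simp, List.isChain_append.2 ⟨hchain, List.isChain_singleton x, ?_⟩,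
    by simpa using hnodup.concat hxl, ?_, by simp⟩
  · simp only [hlast, Option.mem_def, Option.some.injEq, List.head?_cons]
    rintro _ rfl _ rfl
    exact hyx
  · simpa [or_imp, forall_and] using ⟨hmem, hx⟩

namespace IsSchedule

lemma anc_mem_executedBy (hsched : g.IsSchedule Pn sched) {n : ℕ} {u : V} (hu : u ∈ sched n) :
    ∀ {u'}, g.anc u' u → u' ∈ executedBy sched (n + 1) := by
  induction n using Nat.strong_induction_on generalizing u with
  | _ n ih =>
    intro u' hanc
    rcases Relation.ReflTransGen.cases_tail hanc with rfl | ⟨w, hw, hwu⟩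
    · exact ⟨n, n.lt_succ_self, hu⟩
    · obtain ⟨m, hm, hwm⟩ := (hsched.ready n u hu).2 w hwu
      exact executedBy_mono sched (by omega) (ih m hm hwm hw)

lemma anc_mem_executedBy_of_readyAt (hsched : g.IsSchedule Pn sched) {n : ℕ} {u u' : V}
    (hu : g.readyAt sched n u) (hanc : g.anc u' u) (hne : u' ≠ u) :
    u' ∈ executedBy sched n := by
  rcases Relation.ReflTransGen.cases_tail hanc with rfl | ⟨w, hw, hwu⟩
  · exact absurd rfl hne
  · obtain ⟨m, hm, hwm⟩ := hu.2 w hwu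
    exact executedBy_mono sched hm (hsched.anc_mem_executedBy hwm hw)

lemma disjoint_sched (hsched : g.IsSchedule Pn sched) {m n : ℕ} (h : m ≠ n) :
    Disjoint (sched m) (sched n) := by
  wlog hmn : m < n generalizing m n
  · exact (this h.symm (by omega)).symm
  exact Finset.disjoint_left.2 fun u hum hun => (hsched.ready n u hun).1 ⟨m, hmn, hum⟩

lemma mem_diff_executedBy (hsched : g.IsSchedule Pn sched) {ns n : ℕ} {u : V}
    (hu : u ∈ sched n) (hn : ns ≤ n) :
    u ∈ executedBy sched (n + 1) \ executedBy sched ns :=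
  ⟨⟨n, n.lt_succ_self, hu⟩, fun h => (hsched.ready n u hu).1 (executedBy_mono sched hn h)⟩

lemma diff_executedBy_subset_compSet (hsched : g.IsSchedule Pn sched) {s t : V} {ns nt : ℕ}
    (hs : g.readyAt sched ns s) (ht : t ∈ sched nt) :
    executedBy sched (nt + 1) \ executedBy sched ns ⊆ g.compSet s t := by
  rintro u ⟨⟨n, hn, hu⟩, hu_ns⟩
  refine ⟨fun ⟨hus, hne⟩ => hu_ns (hsched.anc_mem_executedBy_of_readyAt hs hus hne),
    fun ⟨htu, hne⟩ => ?_⟩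
  obtain ⟨m, hm, htm⟩ :=
    hsched.anc_mem_executedBy_of_readyAt (hsched.ready n u hu) htu (Ne.symm hne)
  exact Finset.disjoint_left.1 (hsched.disjoint_sched (by omega : m ≠ nt)) htm ht

lemma sum_card_sched_le (hsched : g.IsSchedule Pn sched) {N : Finset ℕ} {S : Set V}
    (hS : S.Finite) (hN : ∀ n ∈ N, ↑(sched n) ⊆ S) : ∑ n ∈ N, (sched n).card ≤ S.ncard := by
  classical
  rw [← Finset.card_biUnion fun m _ n _ h => hsched.disjoint_sched h,
    ← Set.ncard_coe_finset]
  exact Set.ncard_le_ncard (by simpa using hN) hS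

end IsSchedule

lemma Greedy.card_eq_of_readyAt_of_not_mem [Finite V] (hsched : g.IsSchedule Pn sched)
    (hgreedy : g.Greedy Pn sched) {n : ℕ} {x : V} (hx : g.readyAt sched n x)
    (hxn : x ∉ sched n) : (sched n).card = Pn := by
  by_contra hne
  have hready : (sched n : Set V) = {u | g.readyAt sched n u} :=
    Set.eq_of_subset_of_ncard_le (fun u hu => hsched.ready n u hu)
      (by rw [Set.ncard_coe_finset]; have := hgreedy n; omega)
  exact hxn (hready ▸ hx : x ∈ (sched n : Set V))

lemma card_filter_not_le_of_forall_Ico {p : ℕ → Prop} [DecidablePred p] {a r m : ℕ}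
    (hp : ∀ n ∈ Finset.Ico r m, p n) :
    {n ∈ Finset.Ico a (m + 1) | ¬ p n}.card ≤ {n ∈ Finset.Ico a r | ¬ p n}.card + 1 := by
  refine (Finset.card_le_card fun n => ?_).trans (Finset.card_insert_le m _)
  simp only [Finset.mem_filter, Finset.mem_Ico, Finset.mem_insert] at hp ⊢
  rintro ⟨⟨han, hnm⟩, hpn⟩
  by_cases hnr : n < r
  · exact Or.inr ⟨⟨han, hnr⟩, hpn⟩
  · exact Or.inl (by by_contra; exact hpn (hp n ⟨by omega, by omega⟩))

def Busy (g : Dag V P T) (sched : ℕ → Finset V) (t : V) (n : ℕ) : Prop :=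
  ∃ x, g.readyAt sched n x ∧ x ∉ sched n ∧ g.anc x t

lemma IsSchedule.exists_path_card_not_busy_le (hsched : g.IsSchedule Pn sched) (ns : ℕ)
    (t : V) [DecidablePred (g.Busy sched t)] (m : ℕ) :
    ∀ x ∈ sched m, ns ≤ m → g.anc x t → ∃ l,
      g.IsPathTo (executedBy sched (m + 1) \ executedBy sched ns) x l ∧
      {n ∈ Finset.Ico ns (m + 1) | ¬ g.Busy sched t n}.card ≤ l.length := by
  classical
  induction m using Nat.strong_induction_on with
  | _ m ih =>
  intro x hxm hnsm hxt
  have hx : g.readyAt sched m x := hsched.ready m x hxm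
  have hpred : ∃ r, ∀ y, g.edge y x → y ∈ executedBy sched r := ⟨m, hx.2⟩
  -- `x` is ready from step `r` on, and waits during `[r, m)`.
  set r := Nat.find hpred
  have hrm : r ≤ m := Nat.find_min' hpred hx.2
  have hbusy : ∀ n ∈ Finset.Ico r m, g.Busy sched t n := fun n hn =>
    have hn := Finset.mem_Ico.1 hn
    ⟨x, ⟨fun h => hx.1 (executedBy_mono sched hn.2.le h),
      fun y hy => executedBy_mono sched hn.1 (Nat.find_spec hpred y hy)⟩,
      fun h => hx.1 ⟨n, hn.2, h⟩, hxt⟩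
  have hcount := card_filter_not_le_of_forall_Ico (a := ns) hbusy
  have hxS := hsched.mem_diff_executedBy hxm hnsm
  by_cases hr : r ≤ ns
  · exact ⟨[x], .singleton hxS, by simpa [Finset.Ico_eq_empty_of_le hr] using hcount⟩
  obtain ⟨y, hyx, hy⟩ : ∃ y, g.edge y x ∧ y ∉ executedBy sched (r - 1) := by
    simpa using Nat.find_min hpred (show r - 1 < r by omega)
  obtain ⟨j, hj, hyj⟩ := Nat.find_spec hpred y hyx
  obtain rfl : j = r - 1 := by by_contra; exact hy ⟨j, by omega, hyj⟩
  obtain ⟨l, hl, hlcount⟩ :=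
    ih (r - 1) (by omega) y hyj (by omega) (Relation.ReflTransGen.head hyx hxt)
  rw [Nat.sub_add_cancel (by omega)] at hl hlcount
  have hxl : x ∉ l := fun h => hx.1 (executedBy_mono sched hrm (hl.2.2.2.1 x h).1)
  refine ⟨l ++ [x], ?_, by simp only [List.length_append, List.length_singleton]; omega⟩
  exact (hl.mono (Set.sdiff_subset_sdiff_left (executedBy_mono sched (by omega)))).concat
    hyx hxS hxl

lemma IsSchedule.card_not_busy_le (hsched : g.IsSchedule Pn sched) {s t : V} {ns nt : ℕ}
    [DecidablePred (g.Busy sched t)] (hs : g.readyAt sched ns s) (ht : t ∈ sched nt)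
    {SB : ℕ} (hSB : ∀ l : List V, g.IsPathTo (g.compSet s t) t l → l.length ≤ SB) :
    {n ∈ Finset.Ico ns (nt + 1) | ¬ g.Busy sched t n}.card ≤ SB := by
  by_cases h : ns ≤ nt
  · obtain ⟨l, hl, hcount⟩ := hsched.exists_path_card_not_busy_le ns t nt t ht h .refl
    exact hcount.trans (hSB l (hl.mono (hsched.diff_executedBy_subset_compSet hs ht)))
  · simp [Finset.Ico_eq_empty_of_le (by omega : nt + 1 ≤ ns)]

section WellFormed

variable [PartialOrder P] {a : T} {s t : V} {ns nt : ℕ}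

lemma WellFormed.prio_le_vprio_of_readyAt (hwf : g.WellFormed) (hown : g.OwnerConsistent)
    (hsched : g.IsSchedule Pn sched) (hs : (g.verts a).head? = some s)
    (ht : (g.verts a).getLast? = some t) (hns : g.readyAt sched ns s) {n : ℕ} {x : V}
    (hn : ns ≤ n) (hx : g.readyAt sched n x) (hxt : g.anc x t) : g.prio a ≤ g.vprio x := by
  by_cases hxs : x = s
  · rw [vprio, hxs, hown a s (List.mem_of_mem_head? hs)]
  by_cases hanc : g.anc x s
  · exact absurd (executedBy_mono sched hn
      (hsched.anc_mem_executedBy_of_readyAt hns hanc hxs)) hx.1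
  · exact hwf a s t x hs ht hxt hanc

lemma Prompt.card_busy_mul_le [Finite V] (hprompt : g.Prompt Pn sched)
    (hsched : g.IsSchedule Pn sched) (hwf : g.WellFormed) (hown : g.OwnerConsistent)
    (hs : (g.verts a).head? = some s) (ht : (g.verts a).getLast? = some t)
    (hns : g.readyAt sched ns s) (hnt : t ∈ sched nt) [DecidablePred (g.Busy sched t)] :
    {n ∈ Finset.Ico ns (nt + 1) | g.Busy sched t n}.card * Pn ≤
      (g.compSet s t ∩ {u | ¬ g.vprio u < g.prio a}).ncard := by
  have hbusy : ∀ n ∈ {n ∈ Finset.Ico ns (nt + 1) | g.Busy sched t n},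
      (sched n).card = Pn ∧ ↑(sched n) ⊆ g.compSet s t ∩ {u | ¬ g.vprio u < g.prio a} := by
    intro n hn
    obtain ⟨hn, x, hx, hxn, hxt⟩ := Finset.mem_filter.1 hn
    obtain ⟨hnsn, hnnt⟩ := Finset.mem_Ico.1 hn
    have hρx := hwf.prio_le_vprio_of_readyAt hown hsched hs ht hns hnsn hx hxt
    refine ⟨hprompt.1.card_eq_of_readyAt_of_not_mem hsched hx hxn, fun u hu => ⟨?_, ?_⟩⟩
    · exact hsched.diff_executedBy_subset_compSet hns hnt
        (Set.sdiff_subset_sdiff_left (executedBy_mono sched hnnt)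
          (hsched.mem_diff_executedBy hu hnsn))
    · exact fun hlt => hprompt.2 n u x (hsched.ready n u hu) hx hu hxn (hlt.trans_le hρx)
  rw [← Finset.sum_const_nat fun n hn => (hbusy n hn).1]
  exact hsched.sum_card_sched_le (Set.toFinite _) fun n hn => (hbusy n hn).2

end WellFormed

end Dag

open Dag in
theorem prompt_response_time_general {V P T : Type} [Fintype V] [PartialOrder P]
    (g : Dag V P T) (hown : g.OwnerConsistent)
    (hwf : g.WellFormed)
    (Pn : ℕ) (sched : ℕ → Finset V)
    (hsched : g.IsSchedule Pn sched) (hprompt : g.Prompt Pn sched)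
    (a : T) (ρ : P) (hρ : g.prio a = ρ) (s t : V)
    (hs : (g.verts a).head? = some s) (ht : (g.verts a).getLast? = some t)
    -- `s` is ready at the start of step `ns`, and `t` is executed at step `nt`.
    (ns nt : ℕ) (hns : g.readyAt sched ns s) (hnt : t ∈ sched nt)
    -- priority work of the competitor subgraph at priorities not less than `ρ`
    (W : ℕ) (hW : W = ((g.compSet s t) ∩ {u | ¬ g.vprio u < ρ}).ncard)
    -- `SB` bounds the length of every path in the competitor subgraph ending at `t`
    (SB : ℕ) (hSB : ∀ l : List V, g.IsPathTo (g.compSet s t) t l → l.length ≤ SB) :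
    (nt + 1 - ns : ℝ) ≤ (W : ℝ) / (Pn : ℝ) + (SB : ℝ) := by
  classical
  subst hρ hW
  have hPn : (0 : ℝ) < Pn := by
    exact_mod_cast (Finset.card_pos.2 ⟨t, hnt⟩).trans_le (hsched.card_le nt)
  set steps := Finset.Ico ns (nt + 1)
  have hsteps : (nt + 1 : ℝ) ≤ ns + ({n ∈ steps | g.Busy sched t n}.card +
      {n ∈ steps | ¬ g.Busy sched t n}.card : ℕ) := by
    rw [Finset.card_filter_add_card_filter_not, Nat.card_Ico]
    exact_mod_cast (by omega : nt + 1 ≤ ns + (nt + 1 - ns))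
  have hwork : ({n ∈ steps | g.Busy sched t n}.card : ℝ) ≤
      (g.compSet s t ∩ {u | ¬ g.vprio u < g.prio a}).ncard / Pn := by
    rw [le_div_iff₀ hPn]
    exact_mod_cast hprompt.card_busy_mul_le hsched hwf hown hs ht hns hnt
  have hspan : ({n ∈ steps | ¬ g.Busy sched t n}.card : ℝ) ≤ SB := by
    exact_mod_cast hsched.card_not_busy_le hns hnt hSB
  push_cast at hsteps
  linarith

open Dag in
/-- For any prompt schedule on `Pn` processors of a well-formed
DAG `g` containing a thread `a` at priority `ρ` with first vertex `s` and last
vertex `t`, the response time of `a` (from the step at which `s` is ready,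
exclusive, to the step at which `t` is executed, inclusive) is at most
`W_{≴ρ}(comp(a)) / Pn + span_a(comp(a))`. -/
theorem prompt_response_time {V P T : Type} [Fintype V] [PartialOrder P]
    (g : Dag V P T) (hown : g.OwnerConsistent) (hacyc : g.Acyclic)
    (hwf : g.WellFormed)
    (Pn : ℕ) (hPn : 0 < Pn) (sched : ℕ → Finset V)
    (hsched : g.IsSchedule Pn sched) (hprompt : g.Prompt Pn sched)
    (a : T) (ρ : P) (hρ : g.prio a = ρ) (s t : V)
    (hs : (g.verts a).head? = some s) (ht : (g.verts a).getLast? = some t)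
    -- `s` is ready at the start of step `ns`, and `t` is executed at step `nt`.
    (ns nt : ℕ) (hns : g.readyAt sched ns s) (hnt : t ∈ sched nt)
    -- priority work of the competitor subgraph at priorities not less than `ρ`
    (W : ℕ) (hW : W = ((g.compSet s t) ∩ {u | ¬ g.vprio u < ρ}).ncard)
    -- `SB` bounds the length of every path in the competitor subgraph ending at `t`
    (SB : ℕ) (hSB : ∀ l : List V, g.IsPathTo (g.compSet s t) t l → l.length ≤ SB) :
    (nt + 1 - ns : ℝ) ≤ (W : ℝ) / (Pn : ℝ) + (SB : ℝ) :=
  prompt_response_time_general g hown hwf Pn sched hsched hprompt a ρ hρ s t hs ht ns nt hns hnt W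
    hW SB hSB
end

section
/- A greedy schedule of a DAG with W vertices and longest path length S on P processors completes in at most W/P + S steps. -/
/-! Call a step incomplete if it executes fewer than `P` vertices. At an
incomplete step a greedy schedule runs every ready vertex, so each vertex still unexecuted
afterwards has an unexecuted predecessor; following these predecessors backwards yields a path
with one vertex per incomplete step, hence there are fewer than `S` incomplete steps while some
vertex is pending. Every complete step executes `P` of the fewer than `W` vertices executed so
far, so `P * n < W + P * S`. -/

open Finset Function Relation

variable {V : Type}

/-- The set of vertices executed before step `n`. -/
def executedBy (sched : ℕ → Finset V) (n : ℕ) : Set V :=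
  {u | ∃ m < n, u ∈ sched m}

/-- A vertex is ready at step `n` if it is unexecuted and all its predecessors
have been executed. -/
def readyAt (edge : V → V → Prop) (sched : ℕ → Finset V) (n : ℕ) (u : V) : Prop :=
  u ∉ executedBy sched n ∧ ∀ u', edge u' u → u' ∈ executedBy sched n

/-- A valid schedule on `Pn` processors executes at most `Pn` ready vertices per step. -/
structure IsSchedule (edge : V → V → Prop) (Pn : ℕ) (sched : ℕ → Finset V) : Prop where
  card_le : ∀ n, (sched n).card ≤ Pn
  ready : ∀ n u, u ∈ sched n → readyAt edge sched n u

/-- A greedy schedule executes `min Pn (#ready vertices)` vertices at each step. -/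
def Greedy (edge : V → V → Prop) (Pn : ℕ) (sched : ℕ → Finset V) : Prop :=
  ∀ n, (sched n).card = min Pn {u | readyAt edge sched n u}.ncard

theorem List.IsChain.nodup_of_acyclic {α : Type*} {r : α → α → Prop}
    (hr : ∀ a, ¬ TransGen r a a) {l : List α} (hl : l.IsChain r) : l.Nodup := by
  refine (List.isChain_iff_pairwise.mp (hl.imp fun _ _ => TransGen.single)).imp ?_
  rintro a _ hab rfl
  exact hr a hab

section Schedule

variable {edge : V → V → Prop} {Pn : ℕ} {sched : ℕ → Finset V}

theorem executedBy_mono (sched : ℕ → Finset V) : Monotone (executedBy sched) :=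
  fun _ _ hmn _ ⟨k, hk, hu⟩ => ⟨k, hk.trans_le hmn, hu⟩

theorem executedBy_eq_coe_biUnion [DecidableEq V] (sched : ℕ → Finset V) (n : ℕ) :
    executedBy sched n = ↑((range n).biUnion sched) := by
  ext u
  simp [executedBy]

theorem IsSchedule.pairwise_disjoint (hsched : IsSchedule edge Pn sched) :
    Pairwise (Disjoint on sched) := by
  intro m₁ m₂ hne
  wlog hlt : m₁ < m₂ generalizing m₁ m₂
  · exact (this hne.symm (hne.lt_or_gt.resolve_left hlt)).symm
  exact disjoint_left.mpr fun v hv₁ hv₂ => (hsched.ready m₂ v hv₂).1 ⟨m₁, hlt, hv₁⟩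

theorem IsSchedule.card_biUnion_range [DecidableEq V] (hsched : IsSchedule edge Pn sched)
    (n : ℕ) : #((range n).biUnion sched) = ∑ m ∈ range n, #(sched m) :=
  Finset.card_biUnion (hsched.pairwise_disjoint.set_pairwise _)

def incompleteSteps (Pn : ℕ) (sched : ℕ → Finset V) (n : ℕ) : Finset ℕ :=
  {m ∈ range n | #(sched m) < Pn}

theorem card_incompleteSteps_succ (n : ℕ) :
    #(incompleteSteps Pn sched (n + 1)) =
      #(incompleteSteps Pn sched n) + if #(sched n) < Pn then 1 else 0 := by
  unfold incompleteSteps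
  split_ifs with h
  · rw [range_add_one, filter_insert, if_pos h, card_insert_of_notMem (by simp)]
  · rw [range_add_one, filter_insert, if_neg h, add_zero]

theorem mul_le_sum_card_add_mul_card_incompleteSteps (n : ℕ) :
    Pn * n ≤ ∑ m ∈ range n, #(sched m) + Pn * #(incompleteSteps Pn sched n) := by
  induction n with
  | zero => simp
  | succ n ih =>
    rw [sum_range_succ, card_incompleteSteps_succ]
    split_ifs with h
    · linarith
    · linarith [not_lt.mp h]

theorem Greedy.mem_of_readyAt_of_card_lt [Finite V] (hsched : IsSchedule edge Pn sched)
    (hgreedy : Greedy edge Pn sched) {n : ℕ} (hn : #(sched n) < Pn) {u : V}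
    (hu : readyAt edge sched n u) : u ∈ sched n := by
  have hready : (↑(sched n) : Set V) = {v | readyAt edge sched n v} :=
    Set.eq_of_subset_of_ncard_le (fun v hv => hsched.ready n v hv)
      (by have := hgreedy n; rw [Set.ncard_coe_finset]; omega)
  rw [← mem_coe, hready]
  exact hu

theorem Greedy.exists_pred_notMem_executedBy [Finite V] (hsched : IsSchedule edge Pn sched)
    (hgreedy : Greedy edge Pn sched) {n : ℕ} (hn : #(sched n) < Pn) {u : V}
    (hu : u ∉ executedBy sched (n + 1)) : ∃ v, edge v u ∧ v ∉ executedBy sched n := by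
  have hnot_ready : ¬ readyAt edge sched n u := fun hready =>
    hu ⟨n, n.lt_succ_self, hgreedy.mem_of_readyAt_of_card_lt hsched hn hready⟩
  have hu_n : u ∉ executedBy sched n := fun h => hu (executedBy_mono sched n.le_succ h)
  simpa [readyAt, hu_n] using hnot_ready

theorem Greedy.exists_isChain_length_eq [Finite V] (hsched : IsSchedule edge Pn sched)
    (hgreedy : Greedy edge Pn sched) (n : ℕ) {u : V} (hu : u ∉ executedBy sched n) :
    ∃ l : List V, (l ++ [u]).IsChain edge ∧ l.length = #(incompleteSteps Pn sched n) := by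
  induction n generalizing u with
  | zero => exact ⟨[], by simp, by simp [incompleteSteps]⟩
  | succ n ih =>
    rw [card_incompleteSteps_succ]
    split_ifs with hn
    · obtain ⟨v, hvu, hv⟩ := hgreedy.exists_pred_notMem_executedBy hsched hn hu
      obtain ⟨l, hl, hlen⟩ := ih hv
      exact ⟨l ++ [v], hl.append (by simp) (by simpa using hvu), by simp [hlen]⟩
    · simpa using ih fun h => hu (executedBy_mono sched n.le_succ h)

theorem Greedy.mem_executedBy_of_card_add_mul_le [Fintype V]
    (hsched : IsSchedule edge Pn sched) (hgreedy : Greedy edge Pn sched) {S : ℕ}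
    (hS : ∀ l : List V, l.IsChain edge → l.length ≤ S)
    {n : ℕ} (hn : Fintype.card V + Pn * S ≤ Pn * n) (u : V) : u ∈ executedBy sched n := by
  classical
  by_contra hu
  set I := #(incompleteSteps Pn sched n)
  obtain ⟨l, hl, hlen⟩ := hgreedy.exists_isChain_length_eq hsched n hu
  have hIS : Pn * (I + 1) ≤ Pn * S :=
    Nat.mul_le_mul_left Pn (by simpa [hlen] using hS _ hl)
  have hexecuted : ∑ m ∈ range n, #(sched m) < Fintype.card V := by
    rw [← hsched.card_biUnion_range]
    exact card_lt_univ_of_notMem (by simpa [executedBy_eq_coe_biUnion] using hu)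
  have hwork := mul_le_sum_card_add_mul_card_incompleteSteps (Pn := Pn) (sched := sched) n
  linarith

end Schedule

/-- A greedy schedule of a DAG with `W` vertices and longest
path length `S` on `Pn` processors completes in at most `W / Pn + S` steps:
by any step `n ≥ W / Pn + S`, every vertex has been executed. -/
theorem greedy_schedule_bound [Fintype V] (edge : V → V → Prop)
    (hacyc : ∀ u, ¬ Relation.TransGen edge u u)
    (Pn : ℕ) (hPn : 0 < Pn) (sched : ℕ → Finset V)
    (hsched : IsSchedule edge Pn sched) (hgreedy : Greedy edge Pn sched)
    (W : ℕ) (hW : W = Fintype.card V)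
    (S : ℕ) (hS : ∀ l : List V, l.Chain' edge → l.Nodup → l.length ≤ S)
    (n : ℕ) (hn : (W : ℝ) / (Pn : ℝ) + (S : ℝ) ≤ (n : ℝ)) :
    ∀ u : V, u ∈ executedBy sched n := by
  subst hW
  have hbound : Fintype.card V + Pn * S ≤ Pn * n := by
    have hPn' : (0 : ℝ) < Pn := by exact_mod_cast hPn
    have hcard : (Fintype.card V : ℝ) ≤ Pn * (n - S) :=
      (div_le_iff₀' hPn').mp (by linarith)
    exact_mod_cast (by linarith : (Fintype.card V : ℝ) + Pn * S ≤ Pn * n)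
  exact hgreedy.mem_executedBy_of_card_add_mul_le hsched
    (fun l hl => hS l hl (hl.nodup_of_acyclic hacyc)) hbound
end

section
/- Substitution of priorities preserves constraint entailment: if Γ, π prio ⊨ C is derivable, then [ρ/π]Γ ⊨ [ρ/π]C is derivable, where [ρ/π] denotes capture-avoiding substitution of the priority ρ for the priority variable π in constraints and contexts. -/
/-! Priorities, constraints, and the constraint entailment judgment. -/

/-- A priority is a priority constant or a priority variable. -/
inductive Prio (Cst Var : Type) where
  | const : Cst → Prio Cst Var
  | pvar : Var → Prio Cst Var

/-- Constraints: conjunctions of atomic inequalities between priorities. -/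
inductive Constr (Cst Var : Type) where
  | le : Prio Cst Var → Prio Cst Var → Constr Cst Var
  | conj : Constr Cst Var → Constr Cst Var → Constr Cst Var

/-- The constraint entailment judgment `Γ ⊨_R C`, generated by the rules
hyp, assume, refl, trans, and conj.  The context `Γ` is a set of atomic
constraints; `R` is the declared ordering on priority constants. -/
inductive Entails (R : Set (Cst × Cst)) (Γ : Set (Prio Cst Var × Prio Cst Var)) :
    Constr Cst Var → Prop where
  | hyp {ρ₁ ρ₂} : (ρ₁, ρ₂) ∈ Γ → Entails R Γ (.le ρ₁ ρ₂)
  | assume {c₁ c₂} : (c₁, c₂) ∈ R → Entails R Γ (.le (.const c₁) (.const c₂))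
  | refl {ρ} : Entails R Γ (.le ρ ρ)
  | trans {ρ₁ ρ₂ ρ₃} : Entails R Γ (.le ρ₁ ρ₂) → Entails R Γ (.le ρ₂ ρ₃) →
      Entails R Γ (.le ρ₁ ρ₃)
  | conj {C₁ C₂} : Entails R Γ C₁ → Entails R Γ C₂ → Entails R Γ (.conj C₁ C₂)

variable {Cst Var : Type} [DecidableEq Var]

/-- Substitution `[ρ/π]` of a priority for a priority variable in a priority. -/
def Prio.substP (ρ : Prio Cst Var) (π : Var) : Prio Cst Var → Prio Cst Var
  | .const c => .const c
  | .pvar x => if x = π then ρ else .pvar x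

/-- Substitution `[ρ/π]` in a constraint. -/
def Constr.substP (ρ : Prio Cst Var) (π : Var) : Constr Cst Var → Constr Cst Var
  | .le ρ₁ ρ₂ => .le (Prio.substP ρ π ρ₁) (Prio.substP ρ π ρ₂)
  | .conj C₁ C₂ => .conj (C₁.substP ρ π) (C₂.substP ρ π)

/-- Substitution `[ρ/π]` in a context of atomic constraints. -/
def substCtx (ρ : Prio Cst Var) (π : Var)
    (Γ : Set (Prio Cst Var × Prio Cst Var)) : Set (Prio Cst Var × Prio Cst Var) :=
  (fun p => (Prio.substP ρ π p.1, Prio.substP ρ π p.2)) '' Γ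

def Constr.map {V W : Type} (f : Prio Cst V → Prio Cst W) : Constr Cst V → Constr Cst W
  | .le ρ₁ ρ₂ => .le (f ρ₁) (f ρ₂)
  | .conj C₁ C₂ => .conj (C₁.map f) (C₂.map f)

theorem Constr.substP_eq_map (ρ : Prio Cst Var) (π : Var) (C : Constr Cst Var) :
    C.substP ρ π = C.map (Prio.substP ρ π) := by
  induction C with
  | le => rfl
  | conj _ _ ih₁ ih₂ => simp only [Constr.substP, Constr.map, ih₁, ih₂]

/- Every rule is mapped to an instance of the same rule; `assume` is the only one that needs
`f` to fix constants. -/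
theorem Entails.map {V W : Type} {R : Set (Cst × Cst)} {Γ : Set (Prio Cst V × Prio Cst V)}
    {C : Constr Cst V} (f : Prio Cst V → Prio Cst W) (hf : ∀ c, f (.const c) = .const c)
    (h : Entails R Γ C) : Entails R (Prod.map f f '' Γ) (C.map f) := by
  induction h with
  | hyp h => exact .hyp ⟨_, h, rfl⟩
  | assume h => simpa only [Constr.map, hf] using .assume h
  | refl => exact .refl
  | trans _ _ ih₁ ih₂ => exact .trans ih₁ ih₂
  | conj _ _ ih₁ ih₂ => exact .conj ih₁ ih₂

/-- Substitution of priorities preserves constraint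
entailment: if `Γ, π prio ⊨_R C` is derivable then `[ρ/π]Γ ⊨_R [ρ/π]C` is
derivable.  (Priority-variable declarations play no role in the entailment
rules, so the context consists of its constraints.) -/
theorem entails_subst (R : Set (Cst × Cst))
    (Γ : Set (Prio Cst Var × Prio Cst Var)) (C : Constr Cst Var)
    (π : Var) (ρ : Prio Cst Var)
    (hent : Entails R Γ C) :
    Entails R (substCtx ρ π Γ) (C.substP ρ π) := by
  rw [Constr.substP_eq_map]
  exact hent.map (Prio.substP ρ π) fun _ => rfl
end
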